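/- arXiv:2402.17603 — 2 statements merged into one kernel-verified Lean document; each statement's English description precedes it below -/
import Mathlib

section
/- Let A = Σ_{i=1}^n σ_i u_i v_iᵀ with σ_1 ≥ … ≥ σ_n ≥ 0, u_1,…,u_n ∈ ℝ^m orthonormal and v_1,…,v_n ∈ ℝ^n orthonormal, and let h ∈ {1,…,n−1}. Then A_h = Σ_{i=1}^h σ_i u_i v_iᵀ is a best rank-h approximation of A in the spectral norm: ‖A − A_h‖₂ = σ_{h+1}, and for every real m×n matrix B with rank(B) ≤ h one has ‖A − B‖₂ ≥ σ_{h+1}, where ‖·‖₂ denotes the operator norm induced by the Euclidean vector norms. -/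
/-!
For orthonormal `u`, `v` the operator `T x = Σ_{i ∈ s} σ_i ⟨v_i, x⟩ u_i` satisfies
`‖T x‖² = Σ_{i ∈ s} σ_i² ⟨v_i, x⟩²`. Indices start at 0, so the paper's `σ_{h+1}` is `σ_h`.
For `A - A_h` (`s = {i ≥ h}`) Bessel's inequality gives `‖A - A_h‖ ≤ σ_h`, with equality at `v_h`.
If `rank B ≤ h`, the `(h+1)`-dimensional span of `v_0, …, v_h` meets `ker B` in some `x ≠ 0`, and
`‖(A - B) x‖ = ‖A x‖ ≥ σ_h ‖x‖`.
-/

open Matrix BigOperators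
open scoped Matrix.Norms.L2Operator

open Module RealInnerProductSpace

theorem LinearMap.exists_mem_ne_zero_apply_eq_zero_of_finrank_range_lt {K V W : Type*}
    [DivisionRing K] [AddCommGroup V] [Module K V] [AddCommGroup W] [Module K W]
    [FiniteDimensional K V] {f : V →ₗ[K] W} {U : Submodule K V}
    (h : finrank K (range f) < finrank K U) : ∃ x ∈ U, x ≠ 0 ∧ f x = 0 := by
  let g : U →ₗ[K] range f := (f.domRestrict U).codRestrict (range f) fun x => mem_range_self f x
  obtain ⟨⟨x, hxU⟩, hgx, hx0⟩ := (Submodule.ne_bot_iff _).mp (ker_ne_bot_of_finrank_lt h)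
  have hfx : g ⟨x, hxU⟩ = 0 := hgx
  exact ⟨x, hxU, fun hx => hx0 (by simp [hx]), congrArg Subtype.val hfx⟩

section Orthonormal

variable {ι E F : Type*} [NormedAddCommGroup E] [InnerProductSpace ℝ E]
  [NormedAddCommGroup F] [InnerProductSpace ℝ F] {e : ι → E} {f : ι → F}

theorem Orthonormal.norm_sum_smul_sq (hf : Orthonormal ℝ f) (s : Finset ι) (a : ι → ℝ) :
    ‖∑ i ∈ s, a i • f i‖ ^ 2 = ∑ i ∈ s, a i ^ 2 := by
  rw [← real_inner_self_eq_norm_sq, hf.inner_sum]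
  simp [sq]

theorem Orthonormal.finrank_span_image (he : Orthonormal ℝ e) (t : Finset ι) :
    finrank ℝ (Submodule.span ℝ (e '' t)) = t.card := by
  rw [Set.image_eq_range]
  exact (finrank_span_eq_card (he.comp _ Subtype.val_injective).linearIndependent).trans (by simp)

theorem Orthonormal.norm_sum_mul_inner_smul_le (he : Orthonormal ℝ e) (hf : Orthonormal ℝ f)
    {s : Finset ι} {σ : ι → ℝ} {c : ℝ} (hc : 0 ≤ c) (hσ : ∀ i ∈ s, |σ i| ≤ c) (x : E) :
    ‖∑ i ∈ s, (σ i * ⟪e i, x⟫) • f i‖ ≤ c * ‖x‖ := by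
  refine (pow_le_pow_iff_left₀ (norm_nonneg _) (by positivity) two_ne_zero).mp ?_
  calc ‖∑ i ∈ s, (σ i * ⟪e i, x⟫) • f i‖ ^ 2 = ∑ i ∈ s, σ i ^ 2 * ⟪e i, x⟫ ^ 2 := by
        simp_rw [hf.norm_sum_smul_sq, mul_pow]
    _ ≤ ∑ i ∈ s, c ^ 2 * ⟪e i, x⟫ ^ 2 := by
        refine Finset.sum_le_sum fun i hi => mul_le_mul_of_nonneg_right ?_ (sq_nonneg _)
        exact sq_le_sq' (abs_le.mp (hσ i hi)).1 (abs_le.mp (hσ i hi)).2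
    _ = c ^ 2 * ∑ i ∈ s, ‖⟪e i, x⟫‖ ^ 2 := by simp [Finset.mul_sum]
    _ ≤ c ^ 2 * ‖x‖ ^ 2 := by gcongr; exact he.sum_inner_products_le x
    _ = (c * ‖x‖) ^ 2 := by ring

theorem Orthonormal.mul_norm_le_norm_sum_mul_inner_smul (he : Orthonormal ℝ e)
    (hf : Orthonormal ℝ f) {s t : Finset ι} (hts : t ⊆ s) {σ : ι → ℝ} {c : ℝ} (hc : 0 ≤ c)
    (hσ : ∀ i ∈ t, c ≤ |σ i|) {x : E} (hx : x ∈ Submodule.span ℝ (e '' t)) :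
    c * ‖x‖ ≤ ‖∑ i ∈ s, (σ i * ⟪e i, x⟫) • f i‖ := by
  obtain ⟨l, hl, rfl⟩ := Finsupp.mem_span_image_iff_linearCombination ℝ |>.mp hx
  rw [Finsupp.linearCombination_apply_of_mem_supported ℝ hl]
  have hcoeff : ∀ i ∈ t, ⟪e i, ∑ j ∈ t, l j • e j⟫ = l i := fun i hi => he.inner_right_sum l hi
  refine (pow_le_pow_iff_left₀ (by positivity) (norm_nonneg _) two_ne_zero).mp ?_
  calc (c * ‖∑ j ∈ t, l j • e j‖) ^ 2 = ∑ i ∈ t, c ^ 2 * l i ^ 2 := by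
        rw [mul_pow, he.norm_sum_smul_sq, Finset.mul_sum]
    _ ≤ ∑ i ∈ t, (σ i * l i) ^ 2 := by
        gcongr with i hi
        rw [mul_pow, ← sq_abs (σ i)]
        gcongr
        exact hσ i hi
    _ = ∑ i ∈ t, (σ i * ⟪e i, ∑ j ∈ t, l j • e j⟫) ^ 2 :=
        Finset.sum_congr rfl fun i hi => by rw [hcoeff i hi]
    _ ≤ ∑ i ∈ s, (σ i * ⟪e i, ∑ j ∈ t, l j • e j⟫) ^ 2 :=
        Finset.sum_le_sum_of_subset_of_nonneg hts fun _ _ _ => sq_nonneg _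
    _ = _ := (hf.norm_sum_smul_sq s _).symm

end Orthonormal

theorem EuclideanSpace.orthonormal_toLp_of_dotProduct {ι κ : Type*} [Fintype κ] [DecidableEq ι]
    {w : ι → κ → ℝ} (hw : ∀ i j, w i ⬝ᵥ w j = if i = j then 1 else 0) :
    Orthonormal ℝ fun i => WithLp.toLp 2 (w i) := by
  rw [orthonormal_iff_ite]
  intro i j
  rw [EuclideanSpace.inner_toLp_toLp, star_trivial, dotProduct_comm, hw]

namespace Matrix

variable {ι m n : Type*} [Fintype n] [DecidableEq n]

theorem toEuclideanLin_sum_smul_vecMulVec (s : Finset ι) (σ : ι → ℝ) (u : ι → m → ℝ)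
    (v : ι → n → ℝ) (x : EuclideanSpace ℝ n) :
    toEuclideanLin (∑ i ∈ s, σ i • vecMulVec (u i) (v i)) x
      = ∑ i ∈ s, (σ i * ⟪WithLp.toLp 2 (v i), x⟫) • WithLp.toLp 2 (u i) := by
  simp [toLpLin_apply, vecMulVec_mulVec, EuclideanSpace.inner_eq_star_dotProduct,
    dotProduct_comm, mul_smul]

theorem l2_opNorm_le_of_norm_toEuclideanLin_le [Fintype m] {M : Matrix m n ℝ} {c : ℝ}
    (hc : 0 ≤ c) (h : ∀ x, ‖toEuclideanLin M x‖ ≤ c * ‖x‖) : ‖M‖ ≤ c :=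
  ContinuousLinearMap.opNorm_le_bound _ hc h

theorem le_l2_opNorm_of_mul_norm_le [Fintype m] {M : Matrix m n ℝ} {c : ℝ}
    {x : EuclideanSpace ℝ n} (hx : x ≠ 0) (h : c * ‖x‖ ≤ ‖toEuclideanLin M x‖) : c ≤ ‖M‖ :=
  le_of_mul_le_mul_right (h.trans (M.l2_opNorm_mulVec x)) (norm_pos_iff.mpr hx)

theorem rank_eq_finrank_range_toEuclideanLin [Fintype m] (M : Matrix m n ℝ) :
    M.rank = finrank ℝ (LinearMap.range (toEuclideanLin M)) :=
  M.rank_eq_finrank_range_toLin (EuclideanSpace.basisFun m ℝ).toBasis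
    (EuclideanSpace.basisFun n ℝ).toBasis

end Matrix

theorem svd_truncation_best_rank_approx_general {m n : ℕ}
    (u : Fin n → Fin m → ℝ) (v : Fin n → Fin n → ℝ) (σ : Fin n → ℝ)
    (hu : ∀ i j : Fin n, u i ⬝ᵥ u j = if i = j then (1 : ℝ) else 0)
    (hv : ∀ i j : Fin n, v i ⬝ᵥ v j = if i = j then (1 : ℝ) else 0)
    (hσ : Antitone σ) (hσ0 : ∀ i, 0 ≤ σ i)
    (A : Matrix (Fin m) (Fin n) ℝ)
    (hA : A = ∑ i, σ i • vecMulVec (u i) (v i))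
    (h : ℕ) (hlt : h < n)
    (Ah : Matrix (Fin m) (Fin n) ℝ)
    (hAh : Ah = ∑ i ∈ Finset.univ.filter (fun i : Fin n => (i : ℕ) < h),
        σ i • vecMulVec (u i) (v i)) :
    ‖A - Ah‖ = σ ⟨h, hlt⟩ ∧
    ∀ B : Matrix (Fin m) (Fin n) ℝ, B.rank ≤ h → σ ⟨h, hlt⟩ ≤ ‖A - B‖ := by
  set k : Fin n := ⟨h, hlt⟩
  have he := EuclideanSpace.orthonormal_toLp_of_dotProduct hv
  have hf := EuclideanSpace.orthonormal_toLp_of_dotProduct hu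
  have htail : A - Ah = ∑ i ∈ Finset.Ici k, σ i • vecMulVec (u i) (v i) := by
    rw [hA, hAh, ← Finset.sum_filter_add_sum_filter_not _ (fun i : Fin n => (i : ℕ) < h),
      add_sub_cancel_left]
    congr 1
    ext i
    simp [k, Fin.le_def]
  refine ⟨le_antisymm ?_ ?_, fun B hB => ?_⟩
  · refine l2_opNorm_le_of_norm_toEuclideanLin_le (hσ0 k) fun x => ?_
    rw [htail, toEuclideanLin_sum_smul_vecMulVec]
    refine he.norm_sum_mul_inner_smul_le hf (hσ0 k) (fun i hi => ?_) x
    exact (abs_of_nonneg (hσ0 i)).trans_le (hσ (Finset.mem_Ici.mp hi))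
  · refine le_l2_opNorm_of_mul_norm_le (he.ne_zero k) ?_
    rw [htail, toEuclideanLin_sum_smul_vecMulVec]
    exact he.mul_norm_le_norm_sum_mul_inner_smul hf (t := {k}) (by simp) (hσ0 k)
      (by simp [abs_of_nonneg (hσ0 k)]) (Submodule.subset_span (by simp))
  · obtain ⟨x, hxU, hx0, hBx⟩ :=
      (toEuclideanLin B).exists_mem_ne_zero_apply_eq_zero_of_finrank_range_lt
        (U := Submodule.span ℝ ((fun i => WithLp.toLp 2 (v i)) '' Finset.Iic k)) (by
          rw [he.finrank_span_image, Fin.card_Iic, ← rank_eq_finrank_range_toEuclideanLin]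
          exact Nat.lt_succ_of_le hB)
    refine le_l2_opNorm_of_mul_norm_le hx0 ?_
    rw [map_sub, LinearMap.sub_apply, hBx, sub_zero, hA, toEuclideanLin_sum_smul_vecMulVec]
    refine he.mul_norm_le_norm_sum_mul_inner_smul hf (Finset.subset_univ _) (hσ0 k)
      (fun i hi => ?_) hxU
    exact (hσ (Finset.mem_Iic.mp hi)).trans (le_abs_self _)

/-- Eckart–Young: the rank-`h` SVD truncation `A_h` is a best rank-`h` approximation of `A`
in the spectral norm: `‖A − A_h‖₂ = σ_{h+1}`, and any `B` with `rank B ≤ h` satisfies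
`‖A − B‖₂ ≥ σ_{h+1}`. -/
theorem svd_truncation_best_rank_approx {m n : ℕ}
    (u : Fin n → Fin m → ℝ) (v : Fin n → Fin n → ℝ) (σ : Fin n → ℝ)
    (hu : ∀ i j : Fin n, u i ⬝ᵥ u j = if i = j then (1 : ℝ) else 0)
    (hv : ∀ i j : Fin n, v i ⬝ᵥ v j = if i = j then (1 : ℝ) else 0)
    (hσ : Antitone σ) (hσ0 : ∀ i, 0 ≤ σ i)
    (A : Matrix (Fin m) (Fin n) ℝ)
    (hA : A = ∑ i, σ i • vecMulVec (u i) (v i))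
    (h : ℕ) (h1 : 1 ≤ h) (hlt : h < n)
    (Ah : Matrix (Fin m) (Fin n) ℝ)
    (hAh : Ah = ∑ i ∈ Finset.univ.filter (fun i : Fin n => (i : ℕ) < h),
        σ i • vecMulVec (u i) (v i)) :
    ‖A - Ah‖ = σ ⟨h, hlt⟩ ∧
    ∀ B : Matrix (Fin m) (Fin n) ℝ, B.rank ≤ h → σ ⟨h, hlt⟩ ≤ ‖A - B‖ :=
  svd_truncation_best_rank_approx_general u v σ hu hv hσ hσ0 A hA h hlt Ah hAh
end

section
/- Let A be a real m×n matrix and Ψ a real k×n matrix with m ≥ n ≥ k, rank(Ψ) = k, and trivial intersection of the null spaces of A and Ψ. Then there exist matrices Ũ ∈ ℝ^{m×n} and Ṽ ∈ ℝ^{k×n} with orthonormal columns, an invertible matrix Y ∈ ℝ^{n×n}, a diagonal matrix Σ̃ ∈ ℝ^{n×n} with diagonal entries 0 ≤ σ̃_1 ≤ … ≤ σ̃_n ≤ 1, and a matrix Λ̃ ∈ ℝ^{k×n} consisting of a diagonal block with entries 1 ≥ λ̃_1 ≥ … ≥ λ̃_k ≥ 0 followed by k×(n−k) zeros, such that A =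 Ũ Σ̃ Yᵀ, Ψ = Ṽ Λ̃ Yᵀ, and σ̃_i² + λ̃_i² = 1 for 1 ≤ i ≤ k. -/
/-!
`S = AᵀA + ΨᵀΨ` is positive definite because the null spaces of `A` and `Ψ` meet trivially.
Writing `S = BᵀB` and diagonalizing the symmetric matrix `B⁻ᵀ ΨᵀΨ B⁻¹ = W diag(μ) Wᵀ` with `W`
orthogonal and `μ` decreasing, the matrix `Z = B⁻¹W` satisfies `ZᵀSZ = 1` and `ZᵀΨᵀΨZ = diag μ`.
So the columns of `AZ` and of `ΨZ` are orthogonal, with squared norms `1 - μᵢ` and `μᵢ`; since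
`rank(ΨZ) ≤ k`, `μᵢ = 0` for `i ≥ k` and only the first `k` columns of `ΨZ` survive. Normalizing
the nonzero columns and completing them to orthonormal families gives `Ũ` and `Ṽ`, with
`σ̃ᵢ = √(1 - μᵢ)`, `λ̃ᵢ = √μᵢ` and `Y = Z⁻ᵀ`.
-/

open Matrix Module

namespace Matrix

variable {m n : Type*} [Fintype m] [DecidableEq n]

theorem nonneg_of_transpose_mul_self_eq_diagonal {B : Matrix m n ℝ} {d : n → ℝ}
    (hB : Bᵀ * B = diagonal d) (j : n) : 0 ≤ d j := by
  rw [← diagonal_apply_eq d j, ← hB, mul_apply]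
  exact Finset.sum_nonneg fun i _ => mul_self_nonneg _

theorem apply_eq_zero_of_transpose_mul_self_eq_diagonal {B : Matrix m n ℝ} {d : n → ℝ}
    (hB : Bᵀ * B = diagonal d) {j : n} (hj : d j = 0) (i : m) : B i j = 0 := by
  rw [← diagonal_apply_eq d j, ← hB, mul_apply] at hj
  exact (Finset.sum_mul_self_eq_zero_iff _ _).mp hj i (Finset.mem_univ i)

end Matrix

theorem Orthonormal.exists_orthonormal_extension {𝕜 E ι : Type*} [RCLike 𝕜]
    [NormedAddCommGroup E] [InnerProductSpace 𝕜 E] [FiniteDimensional 𝕜 E] [Fintype ι]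
    (hcard : Fintype.card ι ≤ finrank 𝕜 E) {v : ι → E} {s : Set ι}
    (hv : Orthonormal 𝕜 (s.domRestrict v)) :
    ∃ u : ι → E, Orthonormal 𝕜 u ∧ ∀ i ∈ s, u i = v i := by
  classical
  obtain ⟨e⟩ := Function.Embedding.nonempty_of_card_le (β := Fin (finrank 𝕜 E)) (by simpa)
  have hext : Orthonormal 𝕜 ((e '' s).domRestrict (Function.extend e v 0)) := by
    rw [orthonormal_iff_ite] at hv ⊢
    rintro ⟨_, a, ha, rfl⟩ ⟨_, b, hb, rfl⟩
    convert hv ⟨a, ha⟩ ⟨b, hb⟩ using 2 <;> simp [e.injective.extend_apply, Subtype.ext_iff]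
  obtain ⟨b, hb⟩ := hext.exists_orthonormalBasis_extension_of_card_eq (by simp)
  refine ⟨b ∘ e, b.orthonormal.comp e e.injective, fun i hi => ?_⟩
  simpa [e.injective.extend_apply] using hb (e i) (Set.mem_image_of_mem e hi)

namespace Matrix

theorem exists_transpose_mul_self_eq_one_and_eq_mul_diagonal {p q : ℕ} (hqp : q ≤ p)
    (B : Matrix (Fin p) (Fin q) ℝ) (c : Fin q → ℝ) (hB : Bᵀ * B = diagonal (c ^ 2)) :
    ∃ U : Matrix (Fin p) (Fin q) ℝ, Uᵀ * U = 1 ∧ B = U * diagonal c := by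
  let col : Fin q → EuclideanSpace ℝ (Fin p) := fun j => WithLp.toLp 2 (Bᵀ j)
  have hcol : ∀ a b, inner ℝ (col a) (col b) = (Bᵀ * B) a b := fun a b => by
    simp [col, EuclideanSpace.inner_toLp_toLp, mul_apply, dotProduct, mul_comm]
  let s : Set (Fin q) := {j | c j ≠ 0}
  have hon : Orthonormal ℝ (s.domRestrict fun j => (c j)⁻¹ • col j) := by
    rw [orthonormal_iff_ite]
    rintro ⟨a, ha⟩ ⟨b, hb⟩
    simp only [Set.domRestrict_apply, real_inner_smul_left, real_inner_smul_right, hcol, hB,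
      diagonal_apply, Subtype.mk.injEq]
    split_ifs with hab
    · subst hab; field_simp [show c a ≠ 0 from ha]; simp
    · simp
  obtain ⟨u, hu, hus⟩ := hon.exists_orthonormal_extension (by simpa using hqp)
  refine ⟨of fun i j => u j i, ?_, ?_⟩
  · ext a b
    simpa [mul_apply, EuclideanSpace.inner_eq_star_dotProduct, dotProduct, mul_comm, one_apply]
      using orthonormal_iff_ite.mp hu a b
  · ext i j
    rw [mul_diagonal]
    by_cases hcj : c j = 0
    · simp [hcj, apply_eq_zero_of_transpose_mul_self_eq_diagonal hB (j := j) (by simp [hcj]) i]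
    · have hu_j : u j i = (c j)⁻¹ * B i j := by simp [hus j hcj, col]
      rw [of_apply, hu_j]
      field_simp

theorem IsSymm.exists_orthogonal_transpose_mul_mul_eq_diagonal {n : Type*} [Fintype n]
    [DecidableEq n] {C : Matrix n n ℝ} (hC : C.IsSymm) :
    ∃ (W : Matrix n n ℝ) (μ : n → ℝ), Wᵀ * W = 1 ∧ Wᵀ * C * W = diagonal μ := by
  have hH : C.IsHermitian := by
    rw [IsHermitian, conjTranspose_eq_transpose_of_trivial]; exact hC
  let W : Matrix n n ℝ := hH.eigenvectorUnitary
  have hW : Wᵀ * W = 1 := by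
    rw [← conjTranspose_eq_transpose_of_trivial, ← star_eq_conjTranspose]
    exact Unitary.star_mul_self_of_mem hH.eigenvectorUnitary.prop
  refine ⟨W, hH.eigenvalues, hW, ?_⟩
  conv_lhs => rw [hH.spectral_theorem]
  rw [Unitary.conjStarAlgAut_apply, star_eq_conjTranspose, conjTranspose_eq_transpose_of_trivial]
  change Wᵀ * (W * diagonal (RCLike.ofReal ∘ hH.eigenvalues) * Wᵀ) * W = _
  rw [RCLike.ofReal_real_eq_id, Function.id_comp, ← mul_assoc, ← mul_assoc, hW, one_mul,
    mul_assoc, hW, mul_one]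

theorem transpose_mul_mul_submatrix {l n R : Type*} [Fintype n] [NonUnitalNonAssocSemiring R]
    (W C : Matrix n n R) (ρ : l → n) :
    (W.submatrix id ρ)ᵀ * C * W.submatrix id ρ = (Wᵀ * C * W).submatrix ρ ρ := by
  ext i j
  simp [mul_apply]

theorem IsSymm.exists_orthogonal_transpose_mul_mul_eq_diagonal_antitone {n : ℕ}
    {C : Matrix (Fin n) (Fin n) ℝ} (hC : C.IsSymm) :
    ∃ (W : Matrix (Fin n) (Fin n) ℝ) (μ : Fin n → ℝ),
      Wᵀ * W = 1 ∧ Wᵀ * C * W = diagonal μ ∧ Antitone μ := by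
  obtain ⟨W, μ, hW, hWC⟩ := hC.exists_orthogonal_transpose_mul_mul_eq_diagonal
  let ρ := Tuple.sort (-μ)
  refine ⟨W.submatrix id ρ, μ ∘ ρ, ?_, ?_, fun a b hab => ?_⟩
  · simpa [hW] using transpose_mul_mul_submatrix W 1 ρ
  · rw [transpose_mul_mul_submatrix, hWC, submatrix_diagonal_equiv]
  · simpa using Tuple.monotone_sort (-μ) hab

theorem PosDef.exists_isUnit_eq_transpose_mul_self {n : Type*} [Fintype n] [DecidableEq n]
    {S : Matrix n n ℝ} (hS : S.PosDef) : ∃ B : Matrix n n ℝ, IsUnit B ∧ S = Bᵀ * B := by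
  open scoped MatrixOrder in
  obtain ⟨B, hB⟩ := CStarAlgebra.nonneg_iff_eq_star_mul_self.mp hS.posSemidef.nonneg
  rw [star_eq_conjTranspose, conjTranspose_eq_transpose_of_trivial] at hB
  exact ⟨B, isUnit_of_mul_isUnit_right (hB ▸ hS.isUnit), hB⟩

theorem PosDef.exists_isUnit_transpose_mul_mul_eq_one_and_diagonal {n : ℕ}
    {S P : Matrix (Fin n) (Fin n) ℝ} (hS : S.PosDef) (hP : P.IsSymm) :
    ∃ (Z : Matrix (Fin n) (Fin n) ℝ) (μ : Fin n → ℝ),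
      IsUnit Z ∧ Zᵀ * S * Z = 1 ∧ Zᵀ * P * Z = diagonal μ ∧ Antitone μ := by
  obtain ⟨B, hB, rfl⟩ := hS.exists_isUnit_eq_transpose_mul_self
  have hBB : B * B⁻¹ = 1 := mul_nonsing_inv B ((isUnit_iff_isUnit_det B).mp hB)
  have hC : (B⁻¹ᵀ * P * B⁻¹).IsSymm := by
    simp only [IsSymm, transpose_mul, transpose_transpose, hP.eq, mul_assoc]
  obtain ⟨W, μ, hW, hWC, hμ⟩ := hC.exists_orthogonal_transpose_mul_mul_eq_diagonal_antitone
  refine ⟨B⁻¹ * W, μ, (isUnit_nonsing_inv_iff.mpr hB).mul ?_, ?_, ?_, hμ⟩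
  · exact (isUnit_iff_isUnit_det W).mpr (isUnit_det_of_left_inverse hW)
  · calc (B⁻¹ * W)ᵀ * (Bᵀ * B) * (B⁻¹ * W) = Wᵀ * (B * B⁻¹)ᵀ * (B * B⁻¹) * W := by
          simp only [transpose_mul, mul_assoc]
      _ = 1 := by rw [hBB, transpose_one, mul_one, mul_one, hW]
  · rw [← hWC]; simp only [transpose_mul, mul_assoc]

theorem posDef_transpose_mul_self_add_transpose_mul_self {m k n : Type*} [Fintype m]
    [Fintype k] [Fintype n] {A : Matrix m n ℝ} {Ψ : Matrix k n ℝ}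
    (hnull : ∀ x, A *ᵥ x = 0 → Ψ *ᵥ x = 0 → x = 0) : (Aᵀ * A + Ψᵀ * Ψ).PosDef := by
  have hinj : Function.Injective (fromRows A Ψ).mulVec := by
    refine (injective_iff_map_eq_zero (fromRows A Ψ).mulVecLin).mpr fun x hx => ?_
    rw [mulVecLin_apply, fromRows_mulVec] at hx
    exact hnull x (funext fun i => congrFun hx (.inl i)) (funext fun i => congrFun hx (.inr i))
  simpa [conjTranspose_eq_transpose_of_trivial, transpose_fromRows, fromCols_mul_fromRows]
    using PosDef.conjTranspose_mul_self _ hinj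

theorem exists_isUnit_transpose_mul_self_eq_diagonal {m k : Type*} [Fintype m] [Fintype k]
    {n : ℕ} {A : Matrix m (Fin n) ℝ} {Ψ : Matrix k (Fin n) ℝ}
    (hnull : ∀ x, A *ᵥ x = 0 → Ψ *ᵥ x = 0 → x = 0) :
    ∃ (Z : Matrix (Fin n) (Fin n) ℝ) (μ : Fin n → ℝ), IsUnit Z ∧ Antitone μ ∧
      (A * Z)ᵀ * (A * Z) = diagonal (1 - μ) ∧ (Ψ * Z)ᵀ * (Ψ * Z) = diagonal μ := by
  have hP : (Ψᵀ * Ψ).IsSymm := by simp [IsSymm, transpose_mul]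
  obtain ⟨Z, μ, hZ, hZS, hZP, hμ⟩ := (posDef_transpose_mul_self_add_transpose_mul_self
    hnull).exists_isUnit_transpose_mul_mul_eq_one_and_diagonal hP
  refine ⟨Z, μ, hZ, hμ, ?_, ?_⟩
  · calc (A * Z)ᵀ * (A * Z) = Zᵀ * (Aᵀ * A + Ψᵀ * Ψ) * Z - Zᵀ * (Ψᵀ * Ψ) * Z := by
          simp only [transpose_mul, Matrix.mul_add, Matrix.add_mul, Matrix.mul_assoc,
            add_sub_cancel_right]
      _ = diagonal (1 - μ) := by rw [hZS, hZP, ← diagonal_one, diagonal_sub]; rfl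
  · rw [← hZP]; simp only [transpose_mul, Matrix.mul_assoc]

end Matrix

theorem Antitone.eq_zero_of_card_ne_zero_le {α : Type*} [PartialOrder α] [Zero α] [DecidableEq α]
    {n k : ℕ} {μ : Fin n → α} (hμ : Antitone μ) (h0 : ∀ i, 0 ≤ μ i)
    (hcard : Fintype.card {i // μ i ≠ 0} ≤ k) {j : Fin n} (hj : k ≤ j) : μ j = 0 := by
  by_contra hne
  have hpos : 0 < μ j := lt_of_le_of_ne (h0 j) (Ne.symm hne)
  have hsub : Finset.Iic j ⊆ Finset.univ.filter (μ · ≠ 0) := fun i hi => by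
    simp only [Finset.mem_Iic, Finset.mem_filter, Finset.mem_univ, true_and] at hi ⊢
    exact (hpos.trans_le (hμ hi)).ne'
  have := Finset.card_le_card hsub
  rw [Fin.card_Iic, ← Fintype.card_subtype] at this
  omega

theorem Matrix.exists_orthogonal_eq_mul_of_transpose_mul_self_eq_diagonal {k n : ℕ}
    (hkn : k ≤ n) {H : Matrix (Fin k) (Fin n) ℝ} {μ : Fin n → ℝ} (hH : Hᵀ * H = diagonal μ)
    (htail : ∀ j : Fin n, k ≤ j → μ j = 0) (lam : Fin k → ℝ)
    (hlam : ∀ i, lam i ^ 2 = μ (Fin.castLE hkn i)) :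
    ∃ V : Matrix (Fin k) (Fin k) ℝ,
      Vᵀ * V = 1 ∧ H = V * of fun (i : Fin k) (j : Fin n) => if (i : ℕ) = j then lam i else 0 := by
  set Hk := H.submatrix id (Fin.castLE hkn)
  have hHk : Hkᵀ * Hk = diagonal (lam ^ 2) := by
    rw [transpose_submatrix, ← submatrix_mul _ _ _ _ _ Function.bijective_id, hH,
      submatrix_diagonal _ _ (Fin.castLE_injective hkn)]
    exact congrArg diagonal (funext fun i => (hlam i).symm)
  obtain ⟨V, hV, hHkV⟩ := exists_transpose_mul_self_eq_one_and_eq_mul_diagonal le_rfl Hk lam hHk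
  refine ⟨V, hV, ?_⟩
  ext i j
  rw [mul_apply]
  by_cases hj : (j : ℕ) < k
  · have hH_ij : H i j = Hk i ⟨j, hj⟩ := rfl
    rw [Finset.sum_eq_single ⟨j, hj⟩
      (fun l _ hl => by simp [show (l : ℕ) ≠ j from fun h => hl (Fin.ext h)]) (by simp)]
    simp [hH_ij, hHkV, mul_diagonal]
  · rw [apply_eq_zero_of_transpose_mul_self_eq_diagonal hH (htail j (not_lt.mp hj))]
    refine (Finset.sum_eq_zero fun l _ => ?_).symm
    simp [show (l : ℕ) ≠ j by omega]

/-- Existence of the generalized singular value decomposition (GSVD) of a pair `(A, Ψ)`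
with `m ≥ n ≥ k`, `rank Ψ = k`, and trivially intersecting null spaces:
`A = Ũ Σ̃ Yᵀ` and `Ψ = Ṽ Λ̃ Yᵀ` with `Ũ, Ṽ` having orthonormal columns, `Y` invertible,
`Σ̃ = diag(σ̃)` with `0 ≤ σ̃₁ ≤ … ≤ σ̃ₙ ≤ 1`, `Λ̃ = [diag(λ̃), 0] ∈ ℝ^{k×n}` with
`1 ≥ λ̃₁ ≥ … ≥ λ̃ₖ ≥ 0`, and `σ̃ᵢ² + λ̃ᵢ² = 1` for `1 ≤ i ≤ k`. -/
theorem gsvd_exists {m n k : ℕ} (hmn : n ≤ m) (hkn : k ≤ n)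
    (A : Matrix (Fin m) (Fin n) ℝ) (Ψ : Matrix (Fin k) (Fin n) ℝ)
    (hrank : Ψ.rank = k)
    (hnull : ∀ x : Fin n → ℝ, A.mulVec x = 0 → Ψ.mulVec x = 0 → x = 0) :
    ∃ (U : Matrix (Fin m) (Fin n) ℝ) (V : Matrix (Fin k) (Fin k) ℝ)
      (Y : Matrix (Fin n) (Fin n) ℝ) (σ : Fin n → ℝ) (lam : Fin k → ℝ),
      Uᵀ * U = 1 ∧ Vᵀ * V = 1 ∧ IsUnit Y ∧
      Monotone σ ∧ (∀ i, 0 ≤ σ i) ∧ (∀ i, σ i ≤ 1) ∧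
      Antitone lam ∧ (∀ i, 0 ≤ lam i) ∧ (∀ i, lam i ≤ 1) ∧
      A = U * Matrix.diagonal σ * Yᵀ ∧
      Ψ = V * (Matrix.of fun (i : Fin k) (j : Fin n) =>
            if (i : ℕ) = (j : ℕ) then lam i else 0) * Yᵀ ∧
      ∀ i : Fin k, σ (Fin.castLE hkn i) ^ 2 + lam i ^ 2 = 1 := by
  obtain ⟨Z, μ, hZ, hμ, hG, hH⟩ := exists_isUnit_transpose_mul_self_eq_diagonal hnull
  have hμ0 : ∀ i, 0 ≤ μ i := nonneg_of_transpose_mul_self_eq_diagonal hH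
  have hμ1 : ∀ i, μ i ≤ 1 := fun i => sub_nonneg.mp (nonneg_of_transpose_mul_self_eq_diagonal hG i)
  have hcard : Fintype.card {i // μ i ≠ 0} ≤ k := by
    rw [← rank_diagonal, ← hH, rank_transpose_mul_self]
    exact (rank_mul_le_left _ _).trans hrank.le
  have htail : ∀ j : Fin n, k ≤ j → μ j = 0 := fun j => hμ.eq_zero_of_card_ne_zero_le hμ0 hcard
  obtain ⟨U, hU, hGU⟩ := exists_transpose_mul_self_eq_one_and_eq_mul_diagonal hmn (A * Z)
    (fun i => √(1 - μ i)) (by rw [hG]; congr; ext i; simp [Real.sq_sqrt, sub_nonneg.mpr (hμ1 i)])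
  obtain ⟨V, hV, hHV⟩ := exists_orthogonal_eq_mul_of_transpose_mul_self_eq_diagonal hkn hH htail
    (fun i => √(μ (Fin.castLE hkn i))) fun i => Real.sq_sqrt (hμ0 _)
  have hZdet : IsUnit Z.det := (isUnit_iff_isUnit_det Z).mp hZ
  refine ⟨U, V, Z⁻¹ᵀ, fun i => √(1 - μ i), fun i => √(μ (Fin.castLE hkn i)), hU, hV, ?_,
    fun a b hab => ?_, fun i => Real.sqrt_nonneg _, fun i => ?_, fun a b hab => ?_,
    fun i => Real.sqrt_nonneg _, fun i => ?_, ?_, ?_, fun i => ?_⟩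
  · exact (isUnit_transpose _).mpr (isUnit_nonsing_inv_iff.mpr hZ)
  · exact Real.sqrt_le_sqrt (by linarith [hμ hab])
  · exact Real.sqrt_le_one.mpr (by linarith [hμ0 i])
  · exact Real.sqrt_le_sqrt (hμ (Fin.le_def.mpr (by simpa using hab)))
  · exact Real.sqrt_le_one.mpr (hμ1 _)
  · rw [transpose_transpose, ← hGU, mul_nonsing_inv_cancel_right _ _ hZdet]
  · rw [transpose_transpose, ← hHV, mul_nonsing_inv_cancel_right _ _ hZdet]
  · simp [Real.sq_sqrt, hμ0, sub_nonneg.mpr (hμ1 _)]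
end
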